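/- Let J be a finite group and M a finitely generated J-module that is free as a ℤ-module. Then the image N(M^∨) of the norm map on the linear dual M^∨ is canonically isomorphic both to the quotient of the coinvariants (M^∨)_J by its torsion subgroup and to the linear dual (M^J)^∨ of the J-invariants of M. -/

import Mathlib

variable (J M : Type) [Group J] [Fintype J] [AddCommGroup M] [DistribMulAction J M]

/-- The subgroup `M^J` of `J`-invariants of `M`. -/
def invariants : AddSubgroup M where
  carrier := {m | ∀ σ : J, σ • m = m}
  add_mem' := by
    intro a b ha hb σ
    rw [smul_add, ha σ, hb σ]
  zero_mem' := fun σ => smul_zero σ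
  neg_mem' := by
    intro a ha σ
    rw [smul_neg, ha σ]

/-- The augmentation submodule `𝔄_J (M^∨)` of the linear dual `M^∨ = Hom_ℤ(M, ℤ)`, for the
action `(σ · f) (m) = f (σ⁻¹ • m)`; it is generated by the elements `σ · f - f`, and the
coinvariants `(M^∨)_J` are the quotient of `M^∨` by this subgroup. -/
def dualAug : AddSubgroup (M →+ ℤ) :=
  AddSubgroup.closure
    {g | ∃ (σ : J) (f : M →+ ℤ), f.comp (DistribMulAction.toAddMonoidHom M σ⁻¹) - f = g}

/-- The norm map `N : M^∨ → M^∨`, `f ↦ ∑_{σ ∈ J} σ · f`, where `(σ · f)(m) = f(σ⁻¹ • m)`. -/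
def dualNorm : (M →+ ℤ) →+ (M →+ ℤ) where
  toFun f := ∑ σ : J, f.comp (DistribMulAction.toAddMonoidHom M σ⁻¹)
  map_zero' := by simp
  map_add' f g := by
    simp [AddMonoidHom.add_comp, Finset.sum_add_distrib]

/-!
The norm kills the augmentation subgroup, and `N f - |J| • f = ∑ σ, (σ · f - f)` lies in it; as
`M^∨` is torsion-free, the kernel of the map induced by `N` on `(M^∨)_J` is exactly the torsion.
Since `∑ σ, σ⁻¹ • m` is invariant and `(N f) m = |J| • f m` for invariant `m`, `N f = 0` iff `f`
vanishes on `M^J`. Finally `M^J` is saturated in the torsion-free `M`, so `M / M^J` is finitely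
generated and torsion-free, hence free: `M^J` is a direct summand and every functional on it
extends to `M`.
-/

instance AddMonoidHom.instIsAddTorsionFree {M A : Type*} [AddZeroClass M] [AddCommGroup A]
    [IsAddTorsionFree A] : IsAddTorsionFree (M →+ A) :=
  Function.Injective.isAddTorsionFree (AddMonoidHom.coeFn M A) DFunLike.coe_injective

namespace AddSubgroup

variable {M : Type*} [AddCommGroup M] [Module.Finite ℤ M] (S : AddSubgroup M)
  [IsAddTorsionFree (M ⧸ S)]

theorem exists_retraction_of_isAddTorsionFree_quotient :
    ∃ r : M →+ S, r.comp S.subtype = AddMonoidHom.id S := by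
  have : Module.Finite ℤ (M ⧸ S) :=
    .of_surjective (QuotientAddGroup.mk' S).toIntLinearMap (QuotientAddGroup.mk'_surjective S)
  have hexact : Function.Exact S.subtype.toIntLinearMap (QuotientAddGroup.mk' S).toIntLinearMap :=
    fun m => by simp [QuotientAddGroup.eq_zero_iff]
  obtain ⟨s, hs⟩ := (QuotientAddGroup.mk' S).toIntLinearMap.exists_rightInverse_of_surjective
    (LinearMap.range_eq_top.2 (QuotientAddGroup.mk'_surjective S))
  obtain ⟨r, hr⟩ := ((hexact.split_tfae S.subtype_injective
    (QuotientAddGroup.mk'_surjective S)).out 0 1).mp (by exact ⟨s, hs⟩)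
  exact ⟨r.toAddMonoidHom, congrArg LinearMap.toAddMonoidHom hr⟩

theorem compHom'_subtype_surjective (A : Type*) [AddCommGroup A] :
    Function.Surjective (AddMonoidHom.compHom' S.subtype (P := A)) := by
  obtain ⟨r, hr⟩ := S.exists_retraction_of_isAddTorsionFree_quotient
  exact fun h => ⟨h.comp r, by
    change (h.comp r).comp S.subtype = h
    rw [AddMonoidHom.comp_assoc, hr, h.comp_id]⟩

end AddSubgroup

omit [Fintype J] in
lemma mem_invariants_of_nsmul_mem [IsAddTorsionFree M] {n : ℕ} (hn : n ≠ 0) {m : M}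
    (h : n • m ∈ invariants J M) : m ∈ invariants J M := fun σ =>
  nsmul_right_injective hn <| by simpa only [smul_comm σ n m] using h σ

omit [Fintype J] in
instance [IsAddTorsionFree M] : IsAddTorsionFree (M ⧸ invariants J M) :=
  IsAddTorsionFree.of_not_isOfFinAddOrder fun x hx hfin => by
    induction x using QuotientAddGroup.induction_on with | H m => ?_
    obtain ⟨n, hn, hnm⟩ := hfin.exists_nsmul_eq_zero
    rw [← QuotientAddGroup.mk_nsmul, QuotientAddGroup.eq_zero_iff] at hnm
    exact hx ((QuotientAddGroup.eq_zero_iff m).2 (mem_invariants_of_nsmul_mem J M hn.ne' hnm))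

lemma dualNorm_apply (f : M →+ ℤ) (m : M) : dualNorm J M f m = f (∑ σ : J, σ⁻¹ • m) := by
  simp [dualNorm]

lemma sum_inv_smul_mem_invariants (m : M) : ∑ σ : J, σ⁻¹ • m ∈ invariants J M := fun τ => by
  rw [Finset.smul_sum]
  exact Fintype.sum_equiv (Equiv.mulRight τ⁻¹) _ _ fun σ => by simp [mul_smul]

lemma dualNorm_apply_of_mem_invariants (f : M →+ ℤ) {m : M} (hm : m ∈ invariants J M) :
    dualNorm J M f m = Fintype.card J • f m := by
  simp [dualNorm_apply, hm _]

lemma dualAug_le_ker_dualNorm : dualAug J M ≤ (dualNorm J M).ker := by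
  rw [dualAug, AddSubgroup.closure_le]
  rintro _ ⟨σ, f, rfl⟩
  ext m
  rw [map_sub, AddMonoidHom.sub_apply, dualNorm_apply, dualNorm_apply]
  exact sub_eq_zero.2 (congrArg f (sum_inv_smul_mem_invariants J M m σ⁻¹))

lemma dualNorm_sub_card_nsmul_mem_dualAug (f : M →+ ℤ) :
    dualNorm J M f - Fintype.card J • f ∈ dualAug J M := by
  rw [← Finset.card_univ, ← Finset.sum_const, dualNorm, AddMonoidHom.coe_mk, ZeroHom.coe_mk,
    ← Finset.sum_sub_distrib]
  exact AddSubgroup.sum_mem _ fun σ _ => AddSubgroup.subset_closure ⟨σ, f, rfl⟩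

lemma mk_mem_torsion_iff_dualNorm_eq_zero (f : M →+ ℤ) :
    (f : (M →+ ℤ) ⧸ dualAug J M) ∈ AddCommGroup.torsion ((M →+ ℤ) ⧸ dualAug J M) ↔
      dualNorm J M f = 0 := by
  rw [AddCommGroup.mem_torsion]
  constructor
  · intro hf
    obtain ⟨n, hn, hnf⟩ := hf.exists_nsmul_eq_zero
    rw [← QuotientAddGroup.mk_nsmul, QuotientAddGroup.eq_zero_iff] at hnf
    have : n • dualNorm J M f = 0 := by rw [← map_nsmul]; exact dualAug_le_ker_dualNorm J M hnf
    exact (nsmul_eq_zero_iff_right hn.ne').1 this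
  · intro hf
    refine isOfFinAddOrder_iff_nsmul_eq_zero.2 ⟨Fintype.card J, Fintype.card_pos, ?_⟩
    rw [← QuotientAddGroup.mk_nsmul, QuotientAddGroup.eq_zero_iff]
    simpa [hf] using neg_mem (dualNorm_sub_card_nsmul_mem_dualAug J M f)

lemma torsion_eq_map_ker_dualNorm :
    AddCommGroup.torsion ((M →+ ℤ) ⧸ dualAug J M) =
      (dualNorm J M).ker.map (QuotientAddGroup.mk' (dualAug J M)) := by
  ext x
  induction x using QuotientAddGroup.induction_on with | H f => ?_
  rw [mk_mem_torsion_iff_dualNorm_eq_zero, ← QuotientAddGroup.mk'_apply, ← AddSubgroup.mem_comap,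
    QuotientAddGroup.comap_map_mk', sup_eq_right.2 (dualAug_le_ker_dualNorm J M),
    AddMonoidHom.mem_ker]

lemma ker_dualNorm :
    (dualNorm J M).ker = (AddMonoidHom.compHom' (invariants J M).subtype).ker := by
  ext f
  simp only [AddMonoidHom.mem_ker]
  constructor
  · intro hf
    ext ⟨m, hm⟩
    have : Fintype.card J • f m = 0 := by
      rw [← dualNorm_apply_of_mem_invariants J M f hm, hf, AddMonoidHom.zero_apply]
    exact (nsmul_eq_zero_iff_right Fintype.card_ne_zero).1 this
  · intro hf
    ext m
    rw [dualNorm_apply]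
    exact DFunLike.congr_fun hf ⟨_, sum_inv_smul_mem_invariants J M m⟩

/-- If `J` is a finite group and `M` is a finitely generated `J`-module which is free as a
`ℤ`-module, then the image `N(M^∨)` of the norm map on the linear dual `M^∨` is isomorphic
both to the quotient of the coinvariants `(M^∨)_J` by its torsion subgroup, and to the linear
dual `(M^J)^∨` of the `J`-invariants of `M`. -/
theorem dualNorm_range_isos [Module.Finite ℤ M] [Module.Free ℤ M] :
    Nonempty ((dualNorm J M).range ≃+
      (((M →+ ℤ) ⧸ dualAug J M) ⧸ AddCommGroup.torsion ((M →+ ℤ) ⧸ dualAug J M))) ∧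
    Nonempty ((dualNorm J M).range ≃+ ((invariants J M) →+ ℤ)) := by
  have : IsAddTorsionFree M := .of_isTorsionFree ℤ M
  refine ⟨⟨?_⟩, ⟨?_⟩⟩
  · exact (QuotientAddGroup.quotientKerEquivRange (dualNorm J M)).symm.trans
      ((QuotientAddGroup.quotientQuotientEquivQuotient _ _ (dualAug_le_ker_dualNorm J M)).symm.trans
        (QuotientAddGroup.quotientAddEquivOfEq (torsion_eq_map_ker_dualNorm J M).symm))
  · exact (QuotientAddGroup.quotientKerEquivRange (dualNorm J M)).symm.trans
      ((QuotientAddGroup.quotientAddEquivOfEq (ker_dualNorm J M)).trans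
        (QuotientAddGroup.quotientKerEquivOfSurjective _
          ((invariants J M).compHom'_subtype_surjective ℤ)))
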